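/- Let φ : ℝ² → ℝ be smooth with φ_xx - φ_yy = 4 cosh φ. Define β = (1/2)φ_x, γ = (1/2)φ_y, V = (1/4)φ_x² + (1/8)φ_y² + sinh φ, W = (1/4)φ_y² + (1/8)φ_x² - sinh φ. Then β_y = γ_x and (β, γ, V, W) satisfies the projective Gauss–Codazzi equations β_yyy - 2β_y W - β W_y = γ_xxx - 2γ_x V - γ V_x, W_x = 2γ β_y + β γ_y, V_y = 2β γ_x + γ β_x. -/

import Mathlib

/-- Partial derivative in the first variable. -/
noncomputable def pdx {E : Type*} [NormedAddCommGroup E] [NormedSpace ℝ E]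
    (f : ℝ → ℝ → E) : ℝ → ℝ → E := fun x y => deriv (fun t => f t y) x

/-- Partial derivative in the second variable. -/
noncomputable def pdy {E : Type*} [NormedAddCommGroup E] [NormedSpace ℝ E]
    (f : ℝ → ℝ → E) : ℝ → ℝ → E := fun x y => deriv (fun t => f x t) y

open Function Real

lemma pdx_eq {f : ℝ → ℝ → ℝ} (hf : ContDiff ℝ (⊤ : ℕ∞) (uncurry f)) (x y : ℝ) :
    pdx f x y = fderiv ℝ (uncurry f) (x, y) (1, 0) := by
  have hg : HasDerivAt (fun t : ℝ => ((t, y) : ℝ × ℝ)) (1, 0) x :=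
    (hasDerivAt_id x).prodMk (hasDerivAt_const x y)
  exact ((hf.differentiable (by simp) (x, y)).hasFDerivAt.comp_hasDerivAt x hg).deriv

lemma pdy_eq {f : ℝ → ℝ → ℝ} (hf : ContDiff ℝ (⊤ : ℕ∞) (uncurry f)) (x y : ℝ) :
    pdy f x y = fderiv ℝ (uncurry f) (x, y) (0, 1) := by
  have hg : HasDerivAt (fun t : ℝ => ((x, t) : ℝ × ℝ)) (0, 1) y :=
    (hasDerivAt_const y x).prodMk (hasDerivAt_id y)
  exact ((hf.differentiable (by simp) (x, y)).hasFDerivAt.comp_hasDerivAt y hg).deriv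

lemma hasDerivAt_pdx {f : ℝ → ℝ → ℝ} (hf : ContDiff ℝ (⊤ : ℕ∞) (uncurry f)) (x y : ℝ) :
    HasDerivAt (fun t => f t y) (pdx f x y) x := by
  rw [pdx_eq hf x y]
  have hg : HasDerivAt (fun t : ℝ => ((t, y) : ℝ × ℝ)) (1, 0) x :=
    (hasDerivAt_id x).prodMk (hasDerivAt_const x y)
  exact (hf.differentiable (by simp) (x, y)).hasFDerivAt.comp_hasDerivAt x hg

lemma hasDerivAt_pdy {f : ℝ → ℝ → ℝ} (hf : ContDiff ℝ (⊤ : ℕ∞) (uncurry f)) (x y : ℝ) :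
    HasDerivAt (fun t => f x t) (pdy f x y) y := by
  rw [pdy_eq hf x y]
  have hg : HasDerivAt (fun t : ℝ => ((x, t) : ℝ × ℝ)) (0, 1) y :=
    (hasDerivAt_const y x).prodMk (hasDerivAt_id y)
  exact (hf.differentiable (by simp) (x, y)).hasFDerivAt.comp_hasDerivAt y hg

lemma contDiff_pdx {f : ℝ → ℝ → ℝ} (hf : ContDiff ℝ (⊤ : ℕ∞) (uncurry f)) :
    ContDiff ℝ (⊤ : ℕ∞) (uncurry (pdx f)) := by
  have h : uncurry (pdx f) = fun p : ℝ × ℝ => fderiv ℝ (uncurry f) p (1, 0) := by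
    ext ⟨x, y⟩; exact pdx_eq hf x y
  rw [h]
  exact (hf.fderiv_right (by simp)).clm_apply contDiff_const

lemma contDiff_pdy {f : ℝ → ℝ → ℝ} (hf : ContDiff ℝ (⊤ : ℕ∞) (uncurry f)) :
    ContDiff ℝ (⊤ : ℕ∞) (uncurry (pdy f)) := by
  have h : uncurry (pdy f) = fun p : ℝ × ℝ => fderiv ℝ (uncurry f) p (0, 1) := by
    ext ⟨x, y⟩; exact pdy_eq hf x y
  rw [h]
  exact (hf.fderiv_right (by simp)).clm_apply contDiff_const

lemma pdx_pdy_comm {f : ℝ → ℝ → ℝ} (hf : ContDiff ℝ (⊤ : ℕ∞) (uncurry f)) (x y : ℝ) :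
    pdx (pdy f) x y = pdy (pdx f) x y := by
  have hsym : IsSymmSndFDerivAt ℝ (uncurry f) (x, y) :=
    (hf.contDiffAt).isSymmSndFDerivAt (by
      rw [minSmoothness_of_isRCLikeNormedField]; exact WithTop.coe_le_coe.mpr le_top)
  have hd : DifferentiableAt ℝ (fderiv ℝ (uncurry f)) (x, y) :=
    ((hf.fderiv_right (m := 1) (WithTop.coe_le_coe.mpr le_top)).differentiable one_ne_zero) (x, y)
  have e1 : uncurry (pdy f) = fun p : ℝ × ℝ => fderiv ℝ (uncurry f) p (0, 1) := by
    ext ⟨a, b⟩; exact pdy_eq hf a b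
  have e2 : uncurry (pdx f) = fun p : ℝ × ℝ => fderiv ℝ (uncurry f) p (1, 0) := by
    ext ⟨a, b⟩; exact pdx_eq hf a b
  rw [pdx_eq (contDiff_pdy hf) x y, pdy_eq (contDiff_pdx hf) x y, e1, e2,
    fderiv_clm_apply hd (differentiableAt_const _), fderiv_clm_apply hd (differentiableAt_const _)]
  simp [hsym (1, 0) (0, 1)]

theorem R_net_period_four
    (φ : ℝ → ℝ → ℝ) (hφ : ContDiff ℝ (⊤ : ℕ∞) (Function.uncurry φ))
    (hpde : ∀ x y, pdx (pdx φ) x y - pdy (pdy φ) x y = 4 * Real.cosh (φ x y))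
    (β γ V W : ℝ → ℝ → ℝ)
    (hβ : ∀ x y, β x y = (1/2) * pdx φ x y)
    (hγ : ∀ x y, γ x y = (1/2) * pdy φ x y)
    (hV : ∀ x y, V x y = (1/4) * (pdx φ x y)^2 + (1/8) * (pdy φ x y)^2 + Real.sinh (φ x y))
    (hW : ∀ x y, W x y = (1/4) * (pdy φ x y)^2 + (1/8) * (pdx φ x y)^2 - Real.sinh (φ x y)) :
    (∀ x y, pdy β x y = pdx γ x y) ∧
    (∀ x y, pdy (pdy (pdy β)) x y - 2 * pdy β x y * W x y - β x y * pdy W x y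
        = pdx (pdx (pdx γ)) x y - 2 * pdx γ x y * V x y - γ x y * pdx V x y) ∧
    (∀ x y, pdx W x y = 2 * γ x y * pdy β x y + β x y * pdy γ x y) ∧
    (∀ x y, pdy V x y = 2 * β x y * pdx γ x y + γ x y * pdx β x y) := by
  have hφ1 : ContDiff ℝ (⊤ : ℕ∞) (uncurry (pdx φ)) := contDiff_pdx hφ
  have hφ2 : ContDiff ℝ (⊤ : ℕ∞) (uncurry (pdy φ)) := contDiff_pdy hφ
  have hφ11 : ContDiff ℝ (⊤ : ℕ∞) (uncurry (pdx (pdx φ))) := contDiff_pdx hφ1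
  have hφ12 : ContDiff ℝ (⊤ : ℕ∞) (uncurry (pdy (pdx φ))) := contDiff_pdy hφ1
  have hφ22 : ContDiff ℝ (⊤ : ℕ∞) (uncurry (pdy (pdy φ))) := contDiff_pdy hφ2
  have hφ122 : ContDiff ℝ (⊤ : ℕ∞) (uncurry (pdy (pdy (pdx φ)))) := contDiff_pdy hφ12
  have hψ : ContDiff ℝ (⊤ : ℕ∞) (uncurry (pdy (pdy (pdy φ)))) := contDiff_pdy hφ22
  have hχ : ContDiff ℝ (⊤ : ℕ∞) (uncurry (pdx (pdx (pdy φ)))) := contDiff_pdx (contDiff_pdx hφ2)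
  have comm : ∀ x y, pdx (pdy φ) x y = pdy (pdx φ) x y := pdx_pdy_comm hφ
  have ecomm : pdx (pdy φ) = pdy (pdx φ) := funext fun a => funext fun b => comm a b
  have pde' : ∀ x y, pdx (pdx φ) x y = pdy (pdy φ) x y + 4 * Real.cosh (φ x y) := by
    intro x y; linarith [hpde x y]
  -- first derivatives of β and γ
  have hβy : ∀ x y, pdy β x y = 1/2 * pdy (pdx φ) x y := by
    intro x y
    have efun : (fun t => β x t) = fun t => (1/2) * pdx φ x t := funext fun t => hβ x t
    have h : HasDerivAt (fun t => (1/2 : ℝ) * pdx φ x t) (1/2 * pdy (pdx φ) x y) y :=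
      (hasDerivAt_pdy hφ1 x y).const_mul (1/2)
    show deriv (fun t => β x t) y = _
    rw [efun, h.deriv]
  have hβx : ∀ x y, pdx β x y = 1/2 * pdx (pdx φ) x y := by
    intro x y
    have efun : (fun t => β t y) = fun t => (1/2) * pdx φ t y := funext fun t => hβ t y
    have h : HasDerivAt (fun t => (1/2 : ℝ) * pdx φ t y) (1/2 * pdx (pdx φ) x y) x :=
      (hasDerivAt_pdx hφ1 x y).const_mul (1/2)
    show deriv (fun t => β t y) x = _
    rw [efun, h.deriv]
  have hγx : ∀ x y, pdx γ x y = 1/2 * pdx (pdy φ) x y := by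
    intro x y
    have efun : (fun t => γ t y) = fun t => (1/2) * pdy φ t y := funext fun t => hγ t y
    have h : HasDerivAt (fun t => (1/2 : ℝ) * pdy φ t y) (1/2 * pdx (pdy φ) x y) x :=
      (hasDerivAt_pdx hφ2 x y).const_mul (1/2)
    show deriv (fun t => γ t y) x = _
    rw [efun, h.deriv]
  have hγy : ∀ x y, pdy γ x y = 1/2 * pdy (pdy φ) x y := by
    intro x y
    have efun : (fun t => γ x t) = fun t => (1/2) * pdy φ x t := funext fun t => hγ x t
    have h : HasDerivAt (fun t => (1/2 : ℝ) * pdy φ x t) (1/2 * pdy (pdy φ) x y) y :=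
      (hasDerivAt_pdy hφ2 x y).const_mul (1/2)
    show deriv (fun t => γ x t) y = _
    rw [efun, h.deriv]
  -- iterated y-derivatives of β
  have hβyy : ∀ x y, pdy (pdy β) x y = 1/2 * pdy (pdy (pdx φ)) x y := by
    intro x y
    have efun : (fun t => pdy β x t) = fun t => (1/2 : ℝ) * pdy (pdx φ) x t :=
      funext fun t => hβy x t
    have h : HasDerivAt (fun t => (1/2 : ℝ) * pdy (pdx φ) x t)
        (1/2 * pdy (pdy (pdx φ)) x y) y := (hasDerivAt_pdy hφ12 x y).const_mul (1/2)
    show deriv (fun t => pdy β x t) y = _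
    rw [efun, h.deriv]
  have hβyyy : ∀ x y, pdy (pdy (pdy β)) x y = 1/2 * pdy (pdy (pdy (pdx φ))) x y := by
    intro x y
    have efun : (fun t => pdy (pdy β) x t) = fun t => (1/2 : ℝ) * pdy (pdy (pdx φ)) x t :=
      funext fun t => hβyy x t
    have h : HasDerivAt (fun t => (1/2 : ℝ) * pdy (pdy (pdx φ)) x t)
        (1/2 * pdy (pdy (pdy (pdx φ))) x y) y := (hasDerivAt_pdy hφ122 x y).const_mul (1/2)
    show deriv (fun t => pdy (pdy β) x t) y = _
    rw [efun, h.deriv]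
  -- iterated x-derivatives of γ
  have hγxx : ∀ x y, pdx (pdx γ) x y = 1/2 * pdx (pdx (pdy φ)) x y := by
    intro x y
    have efun : (fun t => pdx γ t y) = fun t => (1/2 : ℝ) * pdx (pdy φ) t y :=
      funext fun t => hγx t y
    have h : HasDerivAt (fun t => (1/2 : ℝ) * pdx (pdy φ) t y)
        (1/2 * pdx (pdx (pdy φ)) x y) x := (hasDerivAt_pdx (contDiff_pdx hφ2) x y).const_mul (1/2)
    show deriv (fun t => pdx γ t y) x = _
    rw [efun, h.deriv]
  have hγxxx : ∀ x y, pdx (pdx (pdx γ)) x y = 1/2 * pdx (pdx (pdx (pdy φ))) x y := by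
    intro x y
    have efun : (fun t => pdx (pdx γ) t y) = fun t => (1/2 : ℝ) * pdx (pdx (pdy φ)) t y :=
      funext fun t => hγxx t y
    have h : HasDerivAt (fun t => (1/2 : ℝ) * pdx (pdx (pdy φ)) t y)
        (1/2 * pdx (pdx (pdx (pdy φ))) x y) x := (hasDerivAt_pdx hχ x y).const_mul (1/2)
    show deriv (fun t => pdx (pdx γ) t y) x = _
    rw [efun, h.deriv]
  -- Clairaut chain for the third y-derivative of pdx φ
  have B : ∀ x y, pdy (pdy (pdy (pdx φ))) x y = pdx (pdy (pdy (pdy φ))) x y := by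
    intro x y
    rw [← ecomm]
    have e2 : pdx (pdy (pdy φ)) = pdy (pdx (pdy φ)) :=
      funext fun a => funext fun b => pdx_pdy_comm hφ2 a b
    rw [← e2]
    exact (pdx_pdy_comm hφ22 x y).symm
  -- the PDE differentiated: pdy of pdx pdx φ
  have C2 : ∀ a b, pdy (pdx (pdx φ)) a b
      = pdy (pdy (pdy φ)) a b + 4 * (Real.sinh (φ a b) * pdy φ a b) := by
    intro a b
    have epde : pdx (pdx φ) = fun u v => pdy (pdy φ) u v + 4 * Real.cosh (φ u v) :=
      funext fun u => funext fun v => pde' u v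
    have h : HasDerivAt (fun t => pdy (pdy φ) a t + 4 * Real.cosh (φ a t))
        (pdy (pdy (pdy φ)) a b + 4 * (Real.sinh (φ a b) * pdy φ a b)) b :=
      (hasDerivAt_pdy hφ22 a b).add
        (((Real.hasDerivAt_cosh (φ a b)).comp b (hasDerivAt_pdy hφ a b)).const_mul 4)
    show deriv (fun t => pdx (pdx φ) a t) b = _
    rw [epde]
    exact h.deriv
  -- third x-derivative of pdy φ via the PDE
  have C : ∀ x y, pdx (pdx (pdx (pdy φ))) x y
      = pdx (pdy (pdy (pdy φ))) x y
        + 4 * (Real.cosh (φ x y) * pdx φ x y * pdy φ x y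
          + Real.sinh (φ x y) * pdy (pdx φ) x y) := by
    intro x y
    have e3 : pdx (pdy (pdx φ)) = pdy (pdx (pdx φ)) :=
      funext fun a => funext fun b => pdx_pdy_comm hφ1 a b
    have eC2 : pdy (pdx (pdx φ))
        = fun a b => pdy (pdy (pdy φ)) a b + 4 * (Real.sinh (φ a b) * pdy φ a b) :=
      funext fun a => funext fun b => C2 a b
    rw [ecomm, e3, eC2, ← comm x y]
    have h : HasDerivAt
        (fun t => pdy (pdy (pdy φ)) t y + 4 * (Real.sinh (φ t y) * pdy φ t y))
        (pdx (pdy (pdy (pdy φ))) x y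
          + 4 * (Real.cosh (φ x y) * pdx φ x y * pdy φ x y
            + Real.sinh (φ x y) * pdx (pdy φ) x y)) x :=
      (hasDerivAt_pdx hψ x y).add
        (((HasDerivAt.comp (h := fun t => φ t y) x (Real.hasDerivAt_sinh (φ x y)) (hasDerivAt_pdx hφ x y)).mul
          (hasDerivAt_pdx hφ2 x y)).const_mul 4)
    exact h.deriv
  -- derivatives of W and V
  have hWx : ∀ x y, pdx W x y = 1/2 * pdy φ x y * pdx (pdy φ) x y
      + 1/4 * pdx φ x y * pdx (pdx φ) x y - Real.cosh (φ x y) * pdx φ x y := by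
    intro x y
    have efun : (fun t => W t y)
        = fun t => (1/4) * (pdy φ t y)^2 + (1/8) * (pdx φ t y)^2 - Real.sinh (φ t y) :=
      funext fun t => hW t y
    have h : HasDerivAt
        (fun t => (1/4 : ℝ) * (pdy φ t y)^2 + (1/8) * (pdx φ t y)^2 - Real.sinh (φ t y))
        ((1/4 : ℝ) * ((2:ℝ) * pdy φ x y ^ 1 * pdx (pdy φ) x y)
          + (1/8 : ℝ) * ((2:ℝ) * pdx φ x y ^ 1 * pdx (pdx φ) x y)
          - Real.cosh (φ x y) * pdx φ x y) x :=
      ((((hasDerivAt_pdx hφ2 x y).pow 2).const_mul (1/4)).add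
        (((hasDerivAt_pdx hφ1 x y).pow 2).const_mul (1/8))).sub
        (HasDerivAt.comp (h := fun t => φ t y) x (Real.hasDerivAt_sinh (φ x y)) (hasDerivAt_pdx hφ x y))
    show deriv (fun t => W t y) x = _
    rw [efun, h.deriv]
    ring
  have hWy : ∀ x y, pdy W x y = 1/2 * pdy φ x y * pdy (pdy φ) x y
      + 1/4 * pdx φ x y * pdy (pdx φ) x y - Real.cosh (φ x y) * pdy φ x y := by
    intro x y
    have efun : (fun t => W x t)
        = fun t => (1/4) * (pdy φ x t)^2 + (1/8) * (pdx φ x t)^2 - Real.sinh (φ x t) :=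
      funext fun t => hW x t
    have h : HasDerivAt
        (fun t => (1/4 : ℝ) * (pdy φ x t)^2 + (1/8) * (pdx φ x t)^2 - Real.sinh (φ x t))
        ((1/4 : ℝ) * ((2:ℝ) * pdy φ x y ^ 1 * pdy (pdy φ) x y)
          + (1/8 : ℝ) * ((2:ℝ) * pdx φ x y ^ 1 * pdy (pdx φ) x y)
          - Real.cosh (φ x y) * pdy φ x y) y :=
      ((((hasDerivAt_pdy hφ2 x y).pow 2).const_mul (1/4)).add
        (((hasDerivAt_pdy hφ1 x y).pow 2).const_mul (1/8))).sub
        ((Real.hasDerivAt_sinh (φ x y)).comp y (hasDerivAt_pdy hφ x y))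
    show deriv (fun t => W x t) y = _
    rw [efun, h.deriv]
    ring
  have hVx : ∀ x y, pdx V x y = 1/2 * pdx φ x y * pdx (pdx φ) x y
      + 1/4 * pdy φ x y * pdx (pdy φ) x y + Real.cosh (φ x y) * pdx φ x y := by
    intro x y
    have efun : (fun t => V t y)
        = fun t => (1/4) * (pdx φ t y)^2 + (1/8) * (pdy φ t y)^2 + Real.sinh (φ t y) :=
      funext fun t => hV t y
    have h : HasDerivAt
        (fun t => (1/4 : ℝ) * (pdx φ t y)^2 + (1/8) * (pdy φ t y)^2 + Real.sinh (φ t y))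
        ((1/4 : ℝ) * ((2:ℝ) * pdx φ x y ^ 1 * pdx (pdx φ) x y)
          + (1/8 : ℝ) * ((2:ℝ) * pdy φ x y ^ 1 * pdx (pdy φ) x y)
          + Real.cosh (φ x y) * pdx φ x y) x :=
      ((((hasDerivAt_pdx hφ1 x y).pow 2).const_mul (1/4)).add
        (((hasDerivAt_pdx hφ2 x y).pow 2).const_mul (1/8))).add
        (HasDerivAt.comp (h := fun t => φ t y) x (Real.hasDerivAt_sinh (φ x y)) (hasDerivAt_pdx hφ x y))
    show deriv (fun t => V t y) x = _
    rw [efun, h.deriv]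
    ring
  have hVy : ∀ x y, pdy V x y = 1/2 * pdx φ x y * pdy (pdx φ) x y
      + 1/4 * pdy φ x y * pdy (pdy φ) x y + Real.cosh (φ x y) * pdy φ x y := by
    intro x y
    have efun : (fun t => V x t)
        = fun t => (1/4) * (pdx φ x t)^2 + (1/8) * (pdy φ x t)^2 + Real.sinh (φ x t) :=
      funext fun t => hV x t
    have h : HasDerivAt
        (fun t => (1/4 : ℝ) * (pdx φ x t)^2 + (1/8) * (pdy φ x t)^2 + Real.sinh (φ x t))
        ((1/4 : ℝ) * ((2:ℝ) * pdx φ x y ^ 1 * pdy (pdx φ) x y)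
          + (1/8 : ℝ) * ((2:ℝ) * pdy φ x y ^ 1 * pdy (pdy φ) x y)
          + Real.cosh (φ x y) * pdy φ x y) y :=
      ((((hasDerivAt_pdy hφ1 x y).pow 2).const_mul (1/4)).add
        (((hasDerivAt_pdy hφ2 x y).pow 2).const_mul (1/8))).add
        ((Real.hasDerivAt_sinh (φ x y)).comp y (hasDerivAt_pdy hφ x y))
    show deriv (fun t => V x t) y = _
    rw [efun, h.deriv]
    ring
  refine ⟨?_, ?_, ?_, ?_⟩
  · intro x y
    rw [hβy x y, hγx x y, comm x y]
  · intro x y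
    rw [hβyyy x y, B x y, hβy x y, hW x y, hβ x y, hWy x y,
      hγxxx x y, C x y, hγx x y, hV x y, hγ x y, hVx x y, comm x y]
    linear_combination (1/4 * pdx φ x y * pdy φ x y) * pde' x y
  · intro x y
    rw [hWx x y, hγ x y, hβy x y, hβ x y, hγy x y, comm x y]
    linear_combination (1/4 * pdx φ x y) * pde' x y
  · intro x y
    rw [hVy x y, hβ x y, hγx x y, hγ x y, hβx x y, comm x y]
    linear_combination (-(1/4) * pdy φ x y) * pde' x y
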